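/- arXiv:1811.06304 — 2 statements merged into one kernel-verified Lean document; each statement's English description precedes it below -/
import Mathlib

section
/- Assume (H0) and d₁, d₂, l > 0. Then for every natural number k, the characteristic-equation coefficients satisfy A_k > 0, B_k > 0 and C_k > 0. -/
open Real

/-- Δ = M² − 4·K·(a·m + c·p)·(a·r₂ + c·d − c·r₀) with M = a·m + c·p + K·(a·r₂ + c·d). -/
noncomputable def Delta (r₀ r₂ K d a p c m : ℝ) : ℝ :=
  (a*m + c*p + K*(a*r₂ + c*d))^2 - 4*K*(a*m + c*p)*(a*r₂ + c*d - c*r₀)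

/-- The positive equilibrium predator density v⋆. -/
noncomputable def vstar (r₀ r₂ K d a p c m : ℝ) : ℝ :=
  (-(a*m + c*p + K*(a*r₂ + c*d)) + Real.sqrt (Delta r₀ r₂ K d a p c m)) / (2*K*(a*m + c*p))

/-- The positive equilibrium prey density u⋆ = (r₂ + m·v⋆)/c. -/
noncomputable def ustar (r₀ r₂ K d a p c m : ℝ) : ℝ := (r₂ + m * vstar r₀ r₂ K d a p c m) / c

/-- Linearization coefficient a₁₂. -/
noncomputable def a12 (r₀ r₂ K d a p c m : ℝ) : ℝ :=
  -K*r₀*ustar r₀ r₂ K d a p c m / (1 + K*vstar r₀ r₂ K d a p c m)^2 - p*ustar r₀ r₂ K d a p c m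

/-- Linearization coefficient a₂₁. -/
noncomputable def a21 (r₀ r₂ K d a p c m : ℝ) : ℝ := c * vstar r₀ r₂ K d a p c m

/-- Linearization coefficient a₂₂. -/
noncomputable def a22 (r₀ r₂ K d a p c m : ℝ) : ℝ := -m * vstar r₀ r₂ K d a p c m

/-- Linearization coefficient b₁₁. -/
noncomputable def b11 (r₀ r₂ K d a p c m : ℝ) : ℝ := -a * ustar r₀ r₂ K d a p c m

/-- A_k = (d₁ + d₂)·k²/l² − a₂₂. -/
noncomputable def Ak (r₀ r₂ K d a p c m d₁ d₂ l : ℝ) (k : ℕ) : ℝ :=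
  (d₁ + d₂)*(k:ℝ)^2/l^2 - a22 r₀ r₂ K d a p c m

/-- B_k = d₁·d₂·k⁴/l⁴ − a₂₂·d₁·k²/l² − a₁₂·a₂₁. -/
noncomputable def Bk (r₀ r₂ K d a p c m d₁ d₂ l : ℝ) (k : ℕ) : ℝ :=
  d₁*d₂*(k:ℝ)^4/l^4 - a22 r₀ r₂ K d a p c m * d₁*(k:ℝ)^2/l^2 - a12 r₀ r₂ K d a p c m * a21 r₀ r₂ K d a p c m

/-- C_k = −b₁₁·d₂·k²/l² + a₂₂·b₁₁. -/
noncomputable def Ck (r₀ r₂ K d a p c m d₁ d₂ l : ℝ) (k : ℕ) : ℝ :=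
  -(b11 r₀ r₂ K d a p c m)*d₂*(k:ℝ)^2/l^2 + a22 r₀ r₂ K d a p c m * b11 r₀ r₂ K d a p c m

/-! `v⋆` is the positive root of `K(am + cp)·v² + M·v + (ar₂ + cd − cr₀)`, whose constant term is
negative by (H0). Hence `u⋆ > 0`, and the linearization has the sign pattern
`a₁₂ < 0 < a₂₁`, `a₂₂ < 0`, `b₁₁ < 0`; each of `A_k`, `B_k`, `C_k` is then a sum of nonnegative
diffusion terms and a positive reaction term. -/

theorem quadratic_root_pos {A B C : ℝ} (hA : 0 < A) (hC : C < 0) :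
    0 < (-B + √(B ^ 2 - 4 * A * C)) / (2 * A) := by
  have hB : B < √(B ^ 2 - 4 * A * C) :=
    calc B ≤ |B| := le_abs_self B
      _ = √(B ^ 2) := (sqrt_sq_eq_abs B).symm
      _ < √(B ^ 2 - 4 * A * C) := sqrt_lt_sqrt (sq_nonneg B) (by nlinarith)
  exact div_pos (by linarith) (by positivity)

section Equilibrium

variable {r₀ r₂ K d a p c m : ℝ}

theorem vstar_pos (hK : 0 < K) (ha : 0 < a) (hp : 0 < p) (hc : 0 < c) (hm : 0 < m)
    (hH0 : a * r₂ + c * d - c * r₀ < 0) : 0 < vstar r₀ r₂ K d a p c m := by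
  have hA : 0 < K * (a * m + c * p) := by positivity
  have hΔ : Delta r₀ r₂ K d a p c m = (a * m + c * p + K * (a * r₂ + c * d)) ^ 2
      - 4 * (K * (a * m + c * p)) * (a * r₂ + c * d - c * r₀) := by
    unfold Delta; ring
  unfold vstar
  rw [hΔ, mul_assoc 2 K]
  exact quadratic_root_pos hA hH0

theorem ustar_pos (hr₂ : 0 < r₂) (hc : 0 < c) (hm : 0 ≤ m) (hv : 0 < vstar r₀ r₂ K d a p c m) :
    0 < ustar r₀ r₂ K d a p c m := by
  unfold ustar; positivity

theorem a12_neg (hK : 0 ≤ K) (hr₀ : 0 ≤ r₀) (hp : 0 < p) (hu : 0 < ustar r₀ r₂ K d a p c m) :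
    a12 r₀ r₂ K d a p c m < 0 := by
  have h : 0 ≤ K * r₀ * ustar r₀ r₂ K d a p c m / (1 + K * vstar r₀ r₂ K d a p c m) ^ 2 := by
    positivity
  unfold a12
  simp only [neg_mul, neg_div]
  linarith [mul_pos hp hu]

theorem a21_pos (hc : 0 < c) (hv : 0 < vstar r₀ r₂ K d a p c m) : 0 < a21 r₀ r₂ K d a p c m :=
  mul_pos hc hv

theorem a22_neg (hm : 0 < m) (hv : 0 < vstar r₀ r₂ K d a p c m) : a22 r₀ r₂ K d a p c m < 0 := by
  unfold a22; nlinarith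

theorem b11_neg (ha : 0 < a) (hu : 0 < ustar r₀ r₂ K d a p c m) : b11 r₀ r₂ K d a p c m < 0 := by
  unfold b11; nlinarith

variable {d₁ d₂ l : ℝ}

theorem Ak_pos (hd₁ : 0 ≤ d₁) (hd₂ : 0 ≤ d₂) (ha22 : a22 r₀ r₂ K d a p c m < 0) (k : ℕ) :
    0 < Ak r₀ r₂ K d a p c m d₁ d₂ l k := by
  have : 0 ≤ (d₁ + d₂) * (k : ℝ) ^ 2 / l ^ 2 := by positivity
  unfold Ak; linarith

theorem Bk_pos (hd₁ : 0 ≤ d₁) (hd₂ : 0 ≤ d₂) (ha12 : a12 r₀ r₂ K d a p c m < 0)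
    (ha21 : 0 < a21 r₀ r₂ K d a p c m) (ha22 : a22 r₀ r₂ K d a p c m < 0) (k : ℕ) :
    0 < Bk r₀ r₂ K d a p c m d₁ d₂ l k := by
  have h₄ : 0 ≤ d₁ * d₂ * (k : ℝ) ^ 4 / l ^ 4 := by positivity
  have h₂ : a22 r₀ r₂ K d a p c m * d₁ * (k : ℝ) ^ 2 / l ^ 2 ≤ 0 := by
    have := neg_pos.2 ha22
    have h : 0 ≤ -a22 r₀ r₂ K d a p c m * d₁ * (k : ℝ) ^ 2 / l ^ 2 := by positivity
    simpa only [neg_mul, neg_div, neg_nonneg] using h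
  have h₀ : 0 < -a12 r₀ r₂ K d a p c m * a21 r₀ r₂ K d a p c m :=
    mul_pos (neg_pos.2 ha12) ha21
  unfold Bk; linarith

theorem Ck_pos (hd₂ : 0 ≤ d₂) (ha22 : a22 r₀ r₂ K d a p c m < 0) (hb11 : b11 r₀ r₂ K d a p c m < 0)
    (k : ℕ) : 0 < Ck r₀ r₂ K d a p c m d₁ d₂ l k := by
  have h₂ : 0 ≤ -b11 r₀ r₂ K d a p c m * d₂ * (k : ℝ) ^ 2 / l ^ 2 := by
    have := neg_pos.2 hb11; positivity
  unfold Ck; linarith [mul_pos_of_neg_of_neg ha22 hb11]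

end Equilibrium

theorem stmt3_general (r₀ r₂ K d a p c m d₁ d₂ l : ℝ) (hr₀ : 0 < r₀) (hr₂ : 0 < r₂) (hK : 0 < K) (ha : 0 < a) (hp : 0 < p) (hc : 0 < c) (hm : 0 < m)
    (hd₁ : 0 < d₁) (hd₂ : 0 < d₂)
    (hH0 : a*r₂ + c*d - c*r₀ < 0) :
    ∀ k : ℕ, 0 < Ak r₀ r₂ K d a p c m d₁ d₂ l k ∧ 0 < Bk r₀ r₂ K d a p c m d₁ d₂ l k ∧ 0 < Ck r₀ r₂ K d a p c m d₁ d₂ l k := by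
  have hv := vstar_pos hK ha hp hc hm hH0
  have hu := ustar_pos hr₂ hc hm.le hv
  have ha22 := a22_neg hm hv
  exact fun k => ⟨Ak_pos hd₁.le hd₂.le ha22 k,
    Bk_pos hd₁.le hd₂.le (a12_neg hK.le hr₀.le hp hu) (a21_pos hc hv) ha22 k,
    Ck_pos hd₂.le ha22 (b11_neg ha hu) k⟩

theorem stmt3 (r₀ r₂ K d a p c m d₁ d₂ l : ℝ) (hr₀ : 0 < r₀) (hr₂ : 0 < r₂) (hK : 0 < K) (hd : 0 < d) (ha : 0 < a) (hp : 0 < p) (hc : 0 < c) (hm : 0 < m)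
    (hd₁ : 0 < d₁) (hd₂ : 0 < d₂) (hl : 0 < l)
    (hH0 : a*r₂ + c*d - c*r₀ < 0) :
    ∀ k : ℕ, 0 < Ak r₀ r₂ K d a p c m d₁ d₂ l k ∧ 0 < Bk r₀ r₂ K d a p c m d₁ d₂ l k ∧ 0 < Ck r₀ r₂ K d a p c m d₁ d₂ l k :=
  stmt3_general r₀ r₂ K d a p c m d₁ d₂ l hr₀ hr₂ hK ha hp hc hm hd₁ hd₂ hH0
end

section
/- Assume (H0) and d₁, d₂, l > 0, let k be a natural number, let ω > 0 and τ > 0, and suppose λ = iω is a root of the characteristic equation λ² + A_k·λ + B_k + (−b₁₁·λ + C_k)·exp(−λτ) = 0. Then ω satisfies the quartic equation ω⁴ + (A_k² − 2·B_k − b₁₁²)·ω² + B_k² − C_k² = 0. -/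
/-!
At `λ = iω` the characteristic equation splits into real and imaginary parts
`ω² − B_k = C_k cos ωτ − b₁₁ ω sin ωτ` and `A_k ω = b₁₁ ω cos ωτ + C_k sin ωτ`;
squaring and adding eliminates `τ` via `sin² + cos² = 1`, leaving
`(ω² − B_k)² + A_k² ω² = C_k² + b₁₁² ω²`, which is the quartic.
-/

open Real

/-- The characteristic equation at mode k with delay τ:
λ² + A_k·λ + B_k + (−b₁₁·λ + C_k)·exp(−λτ) = 0. -/
def charEq (r₀ r₂ K d a p c m d₁ d₂ l : ℝ) (k : ℕ) (τ : ℝ) (z : ℂ) : Prop :=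
  z^2 + (Ak r₀ r₂ K d a p c m d₁ d₂ l k : ℂ)*z + (Bk r₀ r₂ K d a p c m d₁ d₂ l k : ℂ)
    + (-(b11 r₀ r₂ K d a p c m : ℂ)*z + (Ck r₀ r₂ K d a p c m d₁ d₂ l k : ℂ)) * Complex.exp (-z*(τ:ℂ)) = 0

lemma re_im_parts_of_root_at_I_mul {A B C b ω τ : ℝ}
    (h : (Complex.I * ω) ^ 2 + (A : ℂ) * (Complex.I * ω) + B
      + (-(b : ℂ) * (Complex.I * ω) + C) * Complex.exp (-(Complex.I * ω) * τ) = 0) :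
    ω ^ 2 - B = C * cos (ω * τ) - b * ω * sin (ω * τ) ∧
      A * ω = b * ω * cos (ω * τ) + C * sin (ω * τ) := by
  have hexp : Complex.exp (-(Complex.I * ω) * τ) = cos (ω * τ) - sin (ω * τ) * Complex.I := by
    rw [show -(Complex.I * ω) * τ = ((-(ω * τ) : ℝ) : ℂ) * Complex.I by push_cast; ring,
      Complex.exp_mul_I]
    push_cast
    rw [Complex.cos_neg, Complex.sin_neg]
    ring
  rw [hexp] at h
  have hre := congrArg Complex.re h
  have him := congrArg Complex.im h
  simp only [Complex.add_re, Complex.add_im, Complex.mul_re, Complex.mul_im, Complex.sub_re,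
    Complex.sub_im, Complex.neg_re, Complex.neg_im, Complex.ofReal_re, Complex.ofReal_im,
    Complex.I_re, Complex.I_im, sq, Complex.zero_re, Complex.zero_im] at hre him
  constructor <;> linarith

lemma quartic_of_cos_sin_eq {A B C b ω θ : ℝ}
    (hre : ω ^ 2 - B = C * cos θ - b * ω * sin θ) (him : A * ω = b * ω * cos θ + C * sin θ) :
    ω ^ 4 + (A ^ 2 - 2 * B - b ^ 2) * ω ^ 2 + B ^ 2 - C ^ 2 = 0 := by
  linear_combination (ω ^ 2 - B + C * cos θ - b * ω * sin θ) * hre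
    + (A * ω + b * ω * cos θ + C * sin θ) * him + (C ^ 2 + b ^ 2 * ω ^ 2) * sin_sq_add_cos_sq θ

theorem stmt7_general (r₀ r₂ K d a p c m d₁ d₂ l : ℝ)
    (k : ℕ) (ω τ : ℝ)
    (hroot : charEq r₀ r₂ K d a p c m d₁ d₂ l k τ (Complex.I * (ω : ℂ))) :
    ω^4 + ((Ak r₀ r₂ K d a p c m d₁ d₂ l k)^2 - 2*Bk r₀ r₂ K d a p c m d₁ d₂ l k - (b11 r₀ r₂ K d a p c m)^2)*ω^2
      + (Bk r₀ r₂ K d a p c m d₁ d₂ l k)^2 - (Ck r₀ r₂ K d a p c m d₁ d₂ l k)^2 = 0 := by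
  obtain ⟨hre, him⟩ := re_im_parts_of_root_at_I_mul hroot
  exact quartic_of_cos_sin_eq hre him

theorem stmt7 (r₀ r₂ K d a p c m d₁ d₂ l : ℝ) (hr₀ : 0 < r₀) (hr₂ : 0 < r₂) (hK : 0 < K) (hd : 0 < d) (ha : 0 < a) (hp : 0 < p) (hc : 0 < c) (hm : 0 < m)
    (hd₁ : 0 < d₁) (hd₂ : 0 < d₂) (hl : 0 < l)
    (hH0 : a*r₂ + c*d - c*r₀ < 0) (k : ℕ) (ω τ : ℝ) (hω : 0 < ω) (hτ : 0 < τ)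
    (hroot : charEq r₀ r₂ K d a p c m d₁ d₂ l k τ (Complex.I * (ω : ℂ))) :
    ω^4 + ((Ak r₀ r₂ K d a p c m d₁ d₂ l k)^2 - 2*Bk r₀ r₂ K d a p c m d₁ d₂ l k - (b11 r₀ r₂ K d a p c m)^2)*ω^2
      + (Bk r₀ r₂ K d a p c m d₁ d₂ l k)^2 - (Ck r₀ r₂ K d a p c m d₁ d₂ l k)^2 = 0 :=
  stmt7_general r₀ r₂ K d a p c m d₁ d₂ l k ω τ hroot
end
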